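/- arXiv:1605.00361 — 3 statements merged into one kernel-verified Lean document; each statement's English description precedes it below -/
import Mathlib

section
/- For the one-dimensional orthogonal polynomial ensemble of N points associated with the equilibrium measure μ_eq, and for any k, ℓ ≥ 1 with N > max(k, ℓ), the covariance of the linear statistics ∑_i T_k(x_i) and ∑_i T_ℓ(x_i) equals (k/2)·δ_{kℓ}; if k = 0 or ℓ = 0 the covariance is 0. -/
/-!
Substituting `x = cos θ` turns `μ_eq` into the normalized Lebesgue measure on `[0, π]` and the
orthonormal Chebyshev polynomials into `√2 cos kθ` (and `1` for `k = 0`). Since `T_k T_i` is a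
polynomial of degree `k + i`, Parseval's identity rewrites the one-point term of the covariance,
which leaves `Cov = ∑_{i < N} ∑_{m ≥ N} ⟨T_k T_i, T_m⟩ ⟨T_l T_i, T_m⟩`. By the product-to-sum
formula for three cosines, `⟨T_k T_i, T_m⟩ = δ_{m, k+i} / √2` as soon as `i, k < m`. So for
`k, l < N` only the pairs `m = i + k`, `k = l`, `N - k ≤ i < N` contribute, each with `1/2`,
and for `k = 0` every term vanishes.
-/

open MeasureTheory

/-- The normalized Chebyshev polynomials of the first kind on `[-1,1]`. -/
noncomputable def nT (k : ℕ) (x : ℝ) : ℝ :=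
  if k = 0 then 1 else Real.sqrt 2 * Real.cos (k * Real.arccos x)

/-- Density of the arcsine (equilibrium) measure on `[-1,1]`. -/
noncomputable def weq (x : ℝ) : ℝ := 1 / (Real.pi * Real.sqrt (1 - x ^ 2))

/-- Christoffel–Darboux kernel of the arcsine measure. -/
noncomputable def KCheb (N : ℕ) (x y : ℝ) : ℝ :=
  ∑ i ∈ Finset.range N, nT i x * nT i y

/-- Covariance of the linear statistics `∑ f(x_i)` and `∑ g(x_i)` for the determinantal
orthogonal polynomial ensemble of `N` points with kernel `K_N` and reference measure `μ_eq`: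
`Cov = ∫ f g K_N(x,x) dμ_eq − ∬ f(x) g(y) K_N(x,y)² dμ_eq(x) dμ_eq(y)`. -/
noncomputable def covOPE (N : ℕ) (f g : ℝ → ℝ) : ℝ :=
  (∫ x in Set.Icc (-1 : ℝ) 1, f x * g x * KCheb N x x * weq x) -
    ∫ x in Set.Icc (-1 : ℝ) 1, ∫ y in Set.Icc (-1 : ℝ) 1,
      f x * g y * (KCheb N x y) ^ 2 * weq x * weq y

open Real Finset

noncomputable def chebNorm (k : ℕ) : ℝ := if k = 0 then 1 else √2

noncomputable def cosT (k : ℕ) (θ : ℝ) : ℝ := chebNorm k * cos (k * θ)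

/-- The inner product of `L²(μ_eq)` in the variable `θ = arccos x`. -/
noncomputable def cosInner (f g : ℝ → ℝ) : ℝ := π⁻¹ * ∫ θ in 0..π, f θ * g θ

noncomputable def linCoeff (k i m : ℕ) : ℝ := cosInner (cosT k * cosT i) (cosT m)

theorem nT_eq_cosT_arccos (k : ℕ) (x : ℝ) : nT k x = cosT k (arccos x) := by
  by_cases hk : k = 0 <;> simp [nT, cosT, chebNorm, hk]

@[fun_prop]
theorem continuous_cosT (k : ℕ) : Continuous (cosT k) := by
  unfold cosT
  fun_prop

theorem chebNorm_ne_zero (k : ℕ) : chebNorm k ≠ 0 := by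
  unfold chebNorm
  split_ifs <;> positivity

theorem integral_cos_intCast_mul (n : ℤ) :
    ∫ θ in 0..π, cos (n * θ) = if n = 0 then π else 0 := by
  split_ifs with hn
  · simp [hn]
  · rw [intervalIntegral.integral_comp_mul_left cos (Int.cast_ne_zero.2 hn), integral_cos]
    simp [sin_int_mul_pi]

theorem cosInner_comm (f g : ℝ → ℝ) : cosInner f g = cosInner g f := by
  simp only [cosInner, mul_comm (f _)]

theorem cosInner_cosT_cosT (a b : ℕ) :
    cosInner (cosT a) (cosT b) = if a = b then 1 else 0 := by
  have hprod : ∀ θ, cosT a θ * cosT b θ = chebNorm a * chebNorm b / 2 *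
      (cos (((a + b : ℤ) : ℝ) * θ) + cos (((a - b : ℤ) : ℝ) * θ)) := by
    intro θ
    simp only [cosT]
    push_cast
    rw [add_mul, sub_mul]
    linear_combination chebNorm a * chebNorm b / 2 * two_mul_cos_mul_cos (a * θ) (b * θ)
  simp only [cosInner, hprod]
  rw [intervalIntegral.integral_const_mul, intervalIntegral.integral_add
      (Continuous.intervalIntegrable (by fun_prop) _ _)
      (Continuous.intervalIntegrable (by fun_prop) _ _),
    integral_cos_intCast_mul, integral_cos_intCast_mul]
  by_cases hab : a = b
  · subst hab
    rcases eq_or_ne a 0 with rfl | ha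
    · simp [chebNorm]
      field_simp
      ring
    · simp [ha, chebNorm]
  · rw [if_neg (by omega), if_neg (by omega), if_neg hab]
    simp

theorem four_mul_cos_mul_cos_mul_cos (a b c : ℝ) :
    4 * cos a * cos b * cos c =
      cos (a + b + c) + cos (a + b - c) + cos (a - b + c) + cos (a - b - c) := by
  linear_combination (2 * cos c) * two_mul_cos_mul_cos a b + two_mul_cos_mul_cos (a - b) c +
    two_mul_cos_mul_cos (a + b) c

theorem linCoeff_eq (k i m : ℕ) :
    linCoeff k i m = chebNorm k * chebNorm i * chebNorm m / 4 *
      ((if k + i + m = 0 then 1 else 0) + (if m = k + i then 1 else 0) +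
        (if i = k + m then 1 else 0) + (if k = i + m then 1 else 0)) := by
  have hprod : ∀ θ, (cosT k * cosT i) θ * cosT m θ = chebNorm k * chebNorm i * chebNorm m / 4 *
      (cos (((k + i + m : ℤ) : ℝ) * θ) + cos (((k + i - m : ℤ) : ℝ) * θ) +
        cos (((k - i + m : ℤ) : ℝ) * θ) + cos (((k - i - m : ℤ) : ℝ) * θ)) := by
    intro θ
    simp only [Pi.mul_apply, cosT]
    push_cast
    simp only [add_mul, sub_mul]
    linear_combination chebNorm k * chebNorm i * chebNorm m / 4 *
      four_mul_cos_mul_cos_mul_cos (k * θ) (i * θ) (m * θ)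
  have hint : ∀ n : ℤ, IntervalIntegrable (fun θ => cos (n * θ)) volume 0 π :=
    fun n => Continuous.intervalIntegrable (by fun_prop) _ _
  have hcond : ((k + i + m : ℤ) = 0 ↔ k + i + m = 0) ∧ ((k + i - m : ℤ) = 0 ↔ m = k + i) ∧
      ((k - i + m : ℤ) = 0 ↔ i = k + m) ∧ ((k - i - m : ℤ) = 0 ↔ k = i + m) := by
    omega
  simp only [linCoeff, cosInner, hprod]
  rw [intervalIntegral.integral_const_mul,
    intervalIntegral.integral_add (((hint _).add (hint _)).add (hint _)) (hint _),
    intervalIntegral.integral_add ((hint _).add (hint _)) (hint _),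
    intervalIntegral.integral_add (hint _) (hint _)]
  simp only [integral_cos_intCast_mul, hcond, ← mul_boole _ π]
  field_simp

theorem linCoeff_of_lt {k i m : ℕ} (hi : i < m) (hk : k < m) :
    linCoeff k i m = if m = k + i then (√2)⁻¹ else 0 := by
  have h₁ : k + i + m ≠ 0 := by omega
  have h₂ : i ≠ k + m := by omega
  have h₃ : k ≠ i + m := by omega
  simp only [linCoeff_eq, h₁, h₂, h₃, if_false, zero_add, add_zero]
  split_ifs with h
  · have hs : √2 * √2 = 2 := mul_self_sqrt zero_le_two
    simp only [chebNorm, if_neg (show k ≠ 0 by omega), if_neg (show i ≠ 0 by omega),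
      if_neg (show m ≠ 0 by omega)]
    field_simp
    linear_combination (√2 * √2 + 2) * hs
  · simp

theorem linCoeff_mul_linCoeff_of_lt {k l i m : ℕ} (hi : i < m) (hk : k < m) (hl : l < m) :
    linCoeff k i m * linCoeff l i m = if m = k + i ∧ k = l then 2⁻¹ else 0 := by
  rw [linCoeff_of_lt hi hk, linCoeff_of_lt hi hl]
  split_ifs <;> first
    | (exfalso; omega)
    | rw [← mul_inv, mul_self_sqrt zero_le_two]
    | simp

/-- The images of the polynomials of degree `< M` under `x = cos θ`. -/
noncomputable def cosPoly (M : ℕ) : Submodule ℝ (ℝ → ℝ) :=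
  Submodule.span ℝ (Set.range fun m : Fin M => cosT m)

theorem cos_natCast_mul_mem_cosPoly {n M : ℕ} (hn : n < M) :
    (fun θ => cos (n * θ)) ∈ cosPoly M := by
  have h : (fun θ => cos (n * θ)) = (chebNorm n)⁻¹ • cosT n := by
    ext θ
    simp [cosT, chebNorm_ne_zero]
  rw [h]
  exact Submodule.smul_mem _ _ (Submodule.subset_span ⟨⟨n, hn⟩, rfl⟩)

theorem cosT_mul_cosT_mem_cosPoly {k i M : ℕ} (h : k + i < M) :
    cosT k * cosT i ∈ cosPoly M := by
  wlog hik : i ≤ k generalizing k i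
  · rw [mul_comm]
    exact this (by omega) (by omega)
  have hprod : cosT k * cosT i = (chebNorm k * chebNorm i / 2) •
      ((fun θ => cos ((k + i : ℕ) * θ)) + fun θ => cos ((k - i : ℕ) * θ)) := by
    ext θ
    simp only [Pi.mul_apply, Pi.smul_apply, Pi.add_apply, smul_eq_mul, cosT]
    push_cast [Nat.cast_sub hik]
    rw [add_mul, sub_mul]
    linear_combination chebNorm k * chebNorm i / 2 * two_mul_cos_mul_cos (k * θ) (i * θ)
  rw [hprod]
  exact Submodule.smul_mem _ _ (Submodule.add_mem _ (cos_natCast_mul_mem_cosPoly h)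
    (cos_natCast_mul_mem_cosPoly (by omega)))

theorem cosInner_sum_smul_cosT {M : ℕ} (c : Fin M → ℝ) {g : ℝ → ℝ} (hg : Continuous g) :
    cosInner (∑ j, c j • cosT j) g = ∑ j, c j * cosInner (cosT j) g := by
  simp only [cosInner, Finset.sum_apply, Pi.smul_apply, smul_eq_mul, Finset.sum_mul]
  rw [intervalIntegral.integral_finsetSum fun j _ =>
      Continuous.intervalIntegrable (by fun_prop) _ _,
    Finset.mul_sum]
  refine Finset.sum_congr rfl fun j _ => ?_
  simp only [mul_assoc, intervalIntegral.integral_const_mul]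
  ring

theorem cosInner_eq_sum_of_mem_cosPoly {M : ℕ} {f g : ℝ → ℝ} (hf : f ∈ cosPoly M)
    (hg : Continuous g) :
    cosInner f g = ∑ m ∈ range M, cosInner f (cosT m) * cosInner (cosT m) g := by
  obtain ⟨c, rfl⟩ := (Submodule.mem_span_range_iff_exists_fun ℝ).1 hf
  have hcoeff : ∀ m : Fin M, cosInner (∑ j, c j • cosT j) (cosT m) = c m := by
    intro m
    simp [cosInner_sum_smul_cosT c (continuous_cosT m), cosInner_cosT_cosT, Fin.val_inj]
  rw [cosInner_sum_smul_cosT c hg, ← Fin.sum_univ_eq_sum_range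
    (fun m => cosInner (∑ j, c j • cosT j) (cosT m) * cosInner (cosT m) g)]
  simp only [hcoeff]

theorem setIntegral_comp_arccos_mul_weq (F : ℝ → ℝ) :
    ∫ x in Set.Icc (-1 : ℝ) 1, F (arccos x) * weq x = π⁻¹ * ∫ θ in 0..π, F θ := by
  rw [← bijOn_cos.image_eq, integral_image_eq_integral_abs_deriv_smul measurableSet_Icc
      (fun θ _ => (hasDerivAt_cos θ).hasDerivWithinAt) injOn_cos,
    integral_Icc_eq_integral_Ioo, intervalIntegral.integral_of_le pi_pos.le,
    integral_Ioc_eq_integral_Ioo, ← integral_const_mul]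
  refine setIntegral_congr_fun measurableSet_Ioo fun θ hθ => ?_
  have hsin : 0 < sin θ := sin_pos_of_pos_of_lt_pi hθ.1 hθ.2
  have hweq : weq (cos θ) = 1 / (π * sin θ) := by
    rw [weq, ← sin_sq, sqrt_sq hsin.le]
  rw [arccos_cos hθ.1.le hθ.2.le, hweq, abs_neg, abs_of_pos hsin, smul_eq_mul]
  field_simp

theorem setIntegral_setIntegral_comp_arccos_mul_weq (G : ℝ → ℝ → ℝ) :
    ∫ x in Set.Icc (-1 : ℝ) 1, ∫ y in Set.Icc (-1 : ℝ) 1,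
        G (arccos x) (arccos y) * weq x * weq y =
      π⁻¹ * ∫ θ in 0..π, π⁻¹ * ∫ φ in 0..π, G θ φ := by
  have hinner : ∀ x, ∫ y in Set.Icc (-1 : ℝ) 1, G (arccos x) (arccos y) * weq x * weq y =
      (π⁻¹ * ∫ φ in 0..π, G (arccos x) φ) * weq x := by
    intro x
    simp only [mul_right_comm _ (weq x)]
    rw [integral_mul_const, setIntegral_comp_arccos_mul_weq]
  simp only [hinner]
  exact setIntegral_comp_arccos_mul_weq fun θ => π⁻¹ * ∫ φ in 0..π, G θ φ

theorem integral_integral_finsetSum_mul {ι : Type*} (s : Finset ι) {f g : ι → ℝ → ℝ}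
    (hf : ∀ p, Continuous (f p)) (hg : ∀ p, Continuous (g p)) (a b c d : ℝ) :
    ∫ θ in a..b, ∫ φ in c..d, ∑ p ∈ s, f p θ * g p φ =
      ∑ p ∈ s, (∫ θ in a..b, f p θ) * ∫ φ in c..d, g p φ := by
  have hinner : ∀ θ, ∫ φ in c..d, ∑ p ∈ s, f p θ * g p φ =
      ∑ p ∈ s, f p θ * ∫ φ in c..d, g p φ := fun θ => by
    rw [intervalIntegral.integral_finsetSum fun p _ =>
      ((hg p).const_mul (f p θ)).intervalIntegrable _ _]
    simp only [intervalIntegral.integral_const_mul]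
  simp only [hinner]
  rw [intervalIntegral.integral_finsetSum fun p _ => ((hf p).mul_const _).intervalIntegrable _ _]
  simp only [intervalIntegral.integral_mul_const]

theorem integral_nT_mul_nT_mul_KCheb_diag (N k l : ℕ) :
    ∫ x in Set.Icc (-1 : ℝ) 1, nT k x * nT l x * KCheb N x x * weq x =
      ∑ i ∈ range N, cosInner (cosT k * cosT i) (cosT l * cosT i) := by
  have hF : ∀ x, nT k x * nT l x * KCheb N x x =
      ∑ i ∈ range N, (cosT k * cosT i) (arccos x) * (cosT l * cosT i) (arccos x) := by
    intro x
    simp only [KCheb, nT_eq_cosT_arccos, mul_sum, Pi.mul_apply]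
    exact sum_congr rfl fun i _ => by ring
  simp only [hF]
  refine (setIntegral_comp_arccos_mul_weq
    fun θ => ∑ i ∈ range N, (cosT k * cosT i) θ * (cosT l * cosT i) θ).trans ?_
  rw [intervalIntegral.integral_finsetSum fun i _ =>
      Continuous.intervalIntegrable (by fun_prop) _ _,
    mul_sum]
  rfl

theorem integral_integral_nT_mul_nT_mul_KCheb_sq (N k l : ℕ) :
    ∫ x in Set.Icc (-1 : ℝ) 1, ∫ y in Set.Icc (-1 : ℝ) 1,
        nT k x * nT l y * KCheb N x y ^ 2 * weq x * weq y =
      ∑ i ∈ range N, ∑ j ∈ range N, linCoeff k i j * linCoeff l i j := by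
  have hG : ∀ x y, nT k x * nT l y * KCheb N x y ^ 2 = ∑ p ∈ range N ×ˢ range N,
      ((cosT k * cosT p.1) (arccos x) * cosT p.2 (arccos x)) *
        ((cosT l * cosT p.1) (arccos y) * cosT p.2 (arccos y)) := by
    intro x y
    rw [KCheb, sq, sum_mul_sum, ← sum_product', mul_sum]
    refine sum_congr rfl fun p _ => ?_
    simp only [nT_eq_cosT_arccos, Pi.mul_apply]
    ring
  simp only [hG]
  rw [setIntegral_setIntegral_comp_arccos_mul_weq fun θ φ => ∑ p ∈ range N ×ˢ range N,
      ((cosT k * cosT p.1) θ * cosT p.2 θ) * ((cosT l * cosT p.1) φ * cosT p.2 φ),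
    intervalIntegral.integral_const_mul, ← mul_assoc, integral_integral_finsetSum_mul _
      (f := fun (p : ℕ × ℕ) θ => (cosT k * cosT p.1) θ * cosT p.2 θ)
      (g := fun (p : ℕ × ℕ) φ => (cosT l * cosT p.1) φ * cosT p.2 φ)
      (fun _ => by fun_prop) (fun _ => by fun_prop),
    mul_sum, sum_product]
  refine sum_congr rfl fun i _ => sum_congr rfl fun j _ => ?_
  simp only [linCoeff, cosInner, Pi.mul_apply]
  ring

theorem covOPE_nT_eq_sum_linCoeff (N k l : ℕ) :
    covOPE N (nT k) (nT l) =
      ∑ i ∈ range N, ∑ m ∈ Ico N (N + k + l), linCoeff k i m * linCoeff l i m := by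
  have hparseval : ∀ i ∈ range N, cosInner (cosT k * cosT i) (cosT l * cosT i) =
      ∑ m ∈ range (N + k + l), linCoeff k i m * linCoeff l i m := by
    intro i hi
    rw [cosInner_eq_sum_of_mem_cosPoly
      (cosT_mul_cosT_mem_cosPoly (M := N + k + l) (by rw [mem_range] at hi; omega))
      (by fun_prop)]
    simp only [cosInner_comm (cosT _) (cosT l * cosT i), linCoeff]
  rw [covOPE, integral_nT_mul_nT_mul_KCheb_diag, integral_integral_nT_mul_nT_mul_KCheb_sq,
    sum_congr rfl hparseval, ← sum_sub_distrib]
  refine sum_congr rfl fun i _ => ?_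
  rw [← sum_range_add_sum_Ico _ (by omega : N ≤ N + k + l), add_sub_cancel_left]

theorem sum_linCoeff_mul_linCoeff_Ico {N k l : ℕ} (hk : k < N) (hl : l < N) :
    ∑ i ∈ range N, ∑ m ∈ Ico N (N + k + l), linCoeff k i m * linCoeff l i m =
      if k = l then (k : ℝ) / 2 else 0 := by
  have hterm : ∀ i ∈ range N, ∀ m ∈ Ico N (N + k + l),
      linCoeff k i m * linCoeff l i m = if m = k + i ∧ k = l then 2⁻¹ else 0 := by
    intro i hi m hm
    rw [mem_range] at hi
    rw [mem_Ico] at hm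
    exact linCoeff_mul_linCoeff_of_lt (by omega) (by omega) (by omega)
  rw [sum_congr rfl fun i hi => sum_congr rfl (hterm i hi)]
  split_ifs with hkl
  · subst hkl
    simp only [and_true, sum_ite_eq', mem_Ico]
    have hfilter : {i ∈ range N | N ≤ k + i ∧ k + i < N + k + k} = Ico (N - k) N := by
      ext i
      simp only [mem_filter, mem_range, mem_Ico]
      omega
    rw [sum_ite, sum_const_zero, add_zero, sum_const, hfilter, Nat.card_Ico,
      Nat.sub_sub_self hk.le, nsmul_eq_mul]
    ring
  · simp [hkl]

/-- For the Chebyshev (equilibrium measure) orthogonal polynomial ensemble of `N` points: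
for `k, ℓ ≥ 1` with `N > max(k,ℓ)`, `Cov[∑ T_k(x_i), ∑ T_ℓ(x_i)] = (k/2) δ_{kℓ}`;
and the covariance vanishes if `k = 0` or `ℓ = 0`. -/
theorem chebyshev_OPE_covariance (N k l : ℕ) :
    (1 ≤ k → 1 ≤ l → max k l < N →
      covOPE N (nT k) (nT l) = if k = l then (k : ℝ) / 2 else 0) ∧
    ((k = 0 ∨ l = 0) → covOPE N (nT k) (nT l) = 0) := by
  rw [covOPE_nT_eq_sum_linCoeff]
  refine ⟨fun _ _ hmax => sum_linCoeff_mul_linCoeff_Ico (by omega) (by omega), fun hkl => ?_⟩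
  refine sum_eq_zero fun i hi => sum_eq_zero fun m hm => ?_
  rw [mem_range] at hi
  rw [mem_Ico] at hm
  rcases hkl with rfl | rfl
  · rw [linCoeff_of_lt (by omega) (by omega), if_neg (by omega), zero_mul]
  · rw [linCoeff_of_lt (k := 0) (by omega) (by omega), if_neg (by omega), mul_zero]
end

section
/- For an orthogonal polynomial ensemble (x_1,…,x_N) with kernel K_N and reference measure μ, and any Lipschitz function f on [-1,1]^d with Lipschitz constant ‖f‖_Lip (w.r.t. the Euclidean norm), Var[∑_{i=1}^N f(x_i)] ≤ ‖f‖_Lip² ∑_{j=1}^d Var[∑_{i=1}^N e_j(x_i)], where e_j(x) = x_j. -/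
/-!
Both sides are integrals against the same nonnegative weight `K(x,y)²`. Since `μ` lives on the
cube, `μ ⊗ μ`-almost every pair lies in the cube, where the Lipschitz bound and the Euclidean
distance give `(f x - f y)² ≤ c² ∑ⱼ (xⱼ - yⱼ)²`; integrating this pointwise bound proves the claim.
-/

open MeasureTheory

namespace MeasureTheory.Measure

variable {α β : Type*} [MeasurableSpace α] [MeasurableSpace β] {μ : Measure α} {ν : Measure β}

/-- Unlike `measure_prod_compl_eq_zero`, this needs no s-finiteness. -/
lemma prod_mem_ae_of_compl_null {s : Set α} {t : Set β} (hs : μ sᶜ = 0) (ht : ν tᶜ = 0) :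
    s ×ˢ t ∈ ae (μ.prod ν) := by
  have h_left : μ.prod ν (sᶜ ×ˢ Set.univ) = 0 :=
    le_zero_iff.mp ((prod_prod_le _ _).trans_eq (by rw [hs, zero_mul]))
  have h_right : μ.prod ν (Set.univ ×ˢ tᶜ) = 0 :=
    le_zero_iff.mp ((prod_prod_le _ _).trans_eq (by rw [ht, mul_zero]))
  rw [mem_ae_iff, Set.compl_prod_eq_union, measure_union_null_iff]
  exact ⟨h_left, h_right⟩

end MeasureTheory.Measure

lemma LipschitzOnWith.sq_sub_le_mul_sum_sq {ι : Type*} [Fintype ι]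
    {f : EuclideanSpace ℝ ι → ℝ} {c : NNReal} {s : Set (EuclideanSpace ℝ ι)}
    (hf : LipschitzOnWith c f s) {x y : EuclideanSpace ℝ ι} (hx : x ∈ s) (hy : y ∈ s) :
    (f x - f y) ^ 2 ≤ (c : ℝ) ^ 2 * ∑ j, (x j - y j) ^ 2 := by
  have h_abs : |f x - f y| ≤ c * dist x y := by
    rw [← Real.dist_eq]
    exact hf.dist_le_mul x hx y hy
  calc (f x - f y) ^ 2 = |f x - f y| ^ 2 := (sq_abs _).symm
    _ ≤ (c * dist x y) ^ 2 := pow_le_pow_left₀ (abs_nonneg _) h_abs 2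
    _ = (c : ℝ) ^ 2 * ∑ j, (x j - y j) ^ 2 := by
      simp only [mul_pow, EuclideanSpace.dist_sq_eq, Real.dist_eq, sq_abs]

theorem lipschitz_variance_bound_general {d : ℕ}
    (μ : Measure (EuclideanSpace ℝ (Fin d)))
    (hsupp : μ {x : EuclideanSpace ℝ (Fin d) | ∀ j, x j ∈ Set.Icc (-1 : ℝ) 1}ᶜ = 0)
    (K : EuclideanSpace ℝ (Fin d) → EuclideanSpace ℝ (Fin d) → ℝ)
    (f : EuclideanSpace ℝ (Fin d) → ℝ) (c : NNReal)
    (hf : LipschitzOnWith c f {x : EuclideanSpace ℝ (Fin d) | ∀ j, x j ∈ Set.Icc (-1 : ℝ) 1})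
    (hint : ∀ j : Fin d,
      Integrable (fun p : EuclideanSpace ℝ (Fin d) × EuclideanSpace ℝ (Fin d) =>
        (p.1 j - p.2 j) ^ 2 * (K p.1 p.2) ^ 2) (μ.prod μ)) :
    (1 / 2) * ∫ p, (f p.1 - f p.2) ^ 2 * (K p.1 p.2) ^ 2 ∂(μ.prod μ)
      ≤ (c : ℝ) ^ 2 * ∑ j : Fin d,
          (1 / 2) * ∫ p, (p.1 j - p.2 j) ^ 2 * (K p.1 p.2) ^ 2 ∂(μ.prod μ) := by
  have h_pointwise : ∀ᵐ p ∂(μ.prod μ), (f p.1 - f p.2) ^ 2 * (K p.1 p.2) ^ 2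
      ≤ (c : ℝ) ^ 2 * ∑ j, (p.1 j - p.2 j) ^ 2 * (K p.1 p.2) ^ 2 := by
    filter_upwards [Measure.prod_mem_ae_of_compl_null hsupp hsupp] with p ⟨hp₁, hp₂⟩
    rw [← Finset.sum_mul, ← mul_assoc]
    exact mul_le_mul_of_nonneg_right (hf.sq_sub_le_mul_sum_sq hp₁ hp₂) (sq_nonneg _)
  have h_integral := integral_mono_of_nonneg (.of_forall fun p => by positivity)
    ((integrable_finsetSum _ fun j _ => hint j).const_mul _) h_pointwise
  rw [integral_const_mul, integral_finsetSum _ fun j _ => hint j] at h_integral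
  rw [← Finset.mul_sum, mul_left_comm]
  gcongr

/-- Lipschitz bound on the variance of a linear statistic of a projection determinantal
point process: if `f` is Lipschitz with constant `c` (w.r.t. the Euclidean norm) on
`[-1,1]^d` and `Var[∑ g(x_i)] = (1/2) ∬ (g(x)−g(y))² K_N(x,y)² dμ dμ`, then
`Var[∑ f(x_i)] ≤ c² ∑_{j=1}^d Var[∑ e_j(x_i)]` where `e_j(x) = x_j`. -/
theorem lipschitz_variance_bound {d : ℕ}
    (μ : Measure (EuclideanSpace ℝ (Fin d)))
    (hsupp : μ {x : EuclideanSpace ℝ (Fin d) | ∀ j, x j ∈ Set.Icc (-1 : ℝ) 1}ᶜ = 0)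
    (φ : ℕ → EuclideanSpace ℝ (Fin d) → ℝ) (N : ℕ)
    (hortho : ∀ k l, ∫ x, φ k x * φ l x ∂μ = if k = l then 1 else 0)
    (K : EuclideanSpace ℝ (Fin d) → EuclideanSpace ℝ (Fin d) → ℝ)
    (hK : ∀ x y, K x y = ∑ k ∈ Finset.range N, φ k x * φ k y)
    (f : EuclideanSpace ℝ (Fin d) → ℝ) (c : NNReal)
    (hf : LipschitzOnWith c f {x : EuclideanSpace ℝ (Fin d) | ∀ j, x j ∈ Set.Icc (-1 : ℝ) 1})
    (hint : ∀ j : Fin d,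
      Integrable (fun p : EuclideanSpace ℝ (Fin d) × EuclideanSpace ℝ (Fin d) =>
        (p.1 j - p.2 j) ^ 2 * (K p.1 p.2) ^ 2) (μ.prod μ)) :
    (1 / 2) * ∫ p, (f p.1 - f p.2) ^ 2 * (K p.1 p.2) ^ 2 ∂(μ.prod μ)
      ≤ (c : ℝ) ^ 2 * ∑ j : Fin d,
          (1 / 2) * ∫ p, (p.1 j - p.2 j) ^ 2 * (K p.1 p.2) ^ 2 ∂(μ.prod μ) :=
  lipschitz_variance_bound_general μ hsupp K f c hf hint
end

section
/- Let k ∈ ℕ^d with k ≠ 0, S = {j : k_j ≠ 0}, P ⊆ S, and M > max_j k_j. Define C_M[P] as the set of n ∈ {0,…,M−1}^d such that: 1 ≤ n_j ≤ M−1 for j ∈ P, k_j < n_j ≤ M−1 for j ∈ S∖P, and n_p ≥ M − k_p for at least one p ∈ P. Then |C_M[P]| = (∑_{j∈P} k_j) M^{d−1} + O(M^{d−2}) as M → ∞. -/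
/-- The set `C_M[P]` of `n ∈ {0,…,M−1}^d` with `1 ≤ n_j ≤ M−1` for `j ∈ P`,
`k_j < n_j ≤ M−1` for `j ∈ S∖P` (where `S = {j : k_j ≠ 0}`), and `n_p ≥ M − k_p` for at
least one `p ∈ P`. -/
def CMP {d : ℕ} (k : Fin d → ℕ) (P : Finset (Fin d)) (M : ℕ) : Finset (Fin d → ℕ) :=
  (Fintype.piFinset fun _ : Fin d => Finset.range M).filter
    (fun n => (∀ j ∈ P, 1 ≤ n j) ∧
      (∀ j : Fin d, k j ≠ 0 → j ∉ P → k j < n j) ∧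
      ∃ p ∈ P, M - k p ≤ n p)

/-!
`C_M[P]` is the box `∏ j, [ℓ j, M)` with the sub-box `∏ j, [ℓ j, u j)` removed, where
`u p = M - k p` for `p ∈ P` (the points at which no `n p` reaches `M - k p`) and `u j = M`
otherwise. Its size is therefore `∏ a - ∏ b` with side lengths `b j ≤ a j` in `[M - K, M]`,
`K = max k + 1`, and `∑ (a j - b j) = ∑_{j ∈ P} k j`. Telescoping the difference of products
squeezes it between `(∑ (a j - b j)) (M - K) ^ (d - 1)` and `(∑ (a j - b j)) M ^ (d - 1)`,
which differ by `O(M ^ (d - 2))`.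
-/

open Finset

theorem Finset.prod_sub_prod_eq_sum {ι R : Type*} [LinearOrder ι] [CommRing R]
    (s : Finset ι) (a b : ι → R) :
    ∏ i ∈ s, a i - ∏ i ∈ s, b i =
      ∑ i ∈ s, (a i - b i) * ∏ j ∈ s.erase i, if j < i then b j else a j := by
  have h := prod_sub_ordered s a (a - b)
  simp only [Pi.sub_apply, sub_sub_cancel] at h
  rw [h, sub_sub_cancel]
  refine sum_congr rfl fun i _ => ?_
  rw [mul_assoc, prod_ite, filter_erase, filter_erase, erase_eq_of_notMem (by simp)]
  congr 3
  ext j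
  simp only [mem_erase, mem_filter, not_lt]
  exact ⟨fun ⟨hj, hlt⟩ => ⟨hlt.ne', hj, hlt.le⟩,
    fun ⟨hne, hj, hle⟩ => ⟨hj, lt_of_le_of_ne hle hne.symm⟩⟩

section ProdSubProd

variable {ι R : Type*} [CommRing R] [LinearOrder R] [IsStrictOrderedRing R]
  {s : Finset ι} {a b : ι → R} {L U : R}

theorem Finset.sum_sub_mul_pow_le_prod_sub_prod (hL : 0 ≤ L) (hLb : ∀ i ∈ s, L ≤ b i)
    (hba : ∀ i ∈ s, b i ≤ a i) :
    (∑ i ∈ s, (a i - b i)) * L ^ (#s - 1) ≤ ∏ i ∈ s, a i - ∏ i ∈ s, b i := by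
  classical
  -- any linear order on `ι` will do for telescoping
  let _ : LinearOrder ι := WellOrderingRel.isWellOrder.linearOrder
  rw [prod_sub_prod_eq_sum, sum_mul]
  refine sum_le_sum fun i hi => mul_le_mul_of_nonneg_left ?_ (sub_nonneg.2 (hba i hi))
  rw [← card_erase_of_mem hi, ← prod_const]
  refine prod_le_prod (fun _ _ => hL) fun j hj => ?_
  have hj := mem_of_mem_erase hj
  split_ifs
  exacts [hLb j hj, (hLb j hj).trans (hba j hj)]

theorem Finset.prod_sub_prod_le_sum_sub_mul_pow (hb : ∀ i ∈ s, 0 ≤ b i)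
    (hba : ∀ i ∈ s, b i ≤ a i) (haU : ∀ i ∈ s, a i ≤ U) :
    ∏ i ∈ s, a i - ∏ i ∈ s, b i ≤ (∑ i ∈ s, (a i - b i)) * U ^ (#s - 1) := by
  classical
  let _ : LinearOrder ι := WellOrderingRel.isWellOrder.linearOrder
  rw [prod_sub_prod_eq_sum, sum_mul]
  refine sum_le_sum fun i hi => mul_le_mul_of_nonneg_left ?_ (sub_nonneg.2 (hba i hi))
  rw [← card_erase_of_mem hi, ← prod_const]
  refine prod_le_prod (fun j hj => ?_) fun j hj => ?_ <;> have hj := mem_of_mem_erase hj <;>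
    split_ifs
  exacts [hb j hj, (hb j hj).trans (hba j hj), (hba j hj).trans (haU j hj), haU j hj]

theorem Finset.abs_prod_sub_prod_sub_sum_sub_mul_pow_le (hL : 0 ≤ L) (hLU : L ≤ U)
    (hLb : ∀ i ∈ s, L ≤ b i) (hba : ∀ i ∈ s, b i ≤ a i) (haU : ∀ i ∈ s, a i ≤ U) :
    |∏ i ∈ s, a i - ∏ i ∈ s, b i - (∑ i ∈ s, (a i - b i)) * U ^ (#s - 1)| ≤
      (∑ i ∈ s, (a i - b i)) * ((U - L) * (#s - 1 : ℕ) * U ^ (#s - 2)) := by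
  have hsum : 0 ≤ ∑ i ∈ s, (a i - b i) := sum_nonneg fun i hi => sub_nonneg.2 (hba i hi)
  have hpow : U ^ (#s - 1) - L ^ (#s - 1) ≤ (U - L) * (#s - 1 : ℕ) * U ^ (#s - 2) := by
    have h := abs_pow_sub_pow_le U L (#s - 1)
    rwa [abs_of_nonneg (sub_nonneg.2 (pow_le_pow_left₀ hL hLU _)),
      abs_of_nonneg (sub_nonneg.2 hLU), abs_of_nonneg (hL.trans hLU), abs_of_nonneg hL,
      max_eq_left hLU, Nat.sub_sub] at h
  have hlower := sum_sub_mul_pow_le_prod_sub_prod hL hLb hba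
  have hupper := prod_sub_prod_le_sum_sub_mul_pow (fun i hi => hL.trans (hLb i hi)) hba haU
  rw [abs_le]
  constructor
  · linarith [mul_le_mul_of_nonneg_left hpow hsum]
  · have : 0 ≤ (U - L) * (#s - 1 : ℕ) * U ^ (#s - 2) := by
      have := sub_nonneg.2 hLU; have := hL.trans hLU; positivity
    linarith [mul_nonneg hsum this]

end ProdSubProd

namespace CMP

variable {d : ℕ} (k : Fin d → ℕ) (P : Finset (Fin d)) (M : ℕ)

def lower (j : Fin d) : ℕ := if j ∈ P then 1 else if k j = 0 then 0 else k j + 1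

def upper (j : Fin d) : ℕ := if j ∈ P then M - k j else M

theorem upper_le (j : Fin d) : upper k P M j ≤ M := by
  unfold upper
  split_ifs <;> omega

theorem eq_sdiff : CMP k P M = Fintype.piFinset (fun j => Ico (lower k P j) M) \
    Fintype.piFinset (fun j => Ico (lower k P j) (upper k P M j)) := by
  ext n
  simp only [CMP, lower, upper, mem_filter, mem_sdiff, Fintype.mem_piFinset, mem_range, mem_Ico]
  constructor
  · rintro ⟨hnM, hP, hS, p, hp, hpM⟩
    refine ⟨fun j => ⟨?_, hnM j⟩, fun h => ?_⟩
    · split_ifs with hj hkj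
      exacts [hP j hj, Nat.zero_le _, hS j hkj hj]
    · have := (h p).2
      rw [if_pos hp] at this
      omega
  · rintro ⟨hbox, hsub⟩
    push Not at hsub
    obtain ⟨p, hp⟩ := hsub
    have hpP : p ∈ P := by
      by_contra hpP
      have := hp (hbox p).1
      rw [if_neg hpP] at this
      exact absurd (hbox p).2 (not_lt.2 this)
    refine ⟨fun j => (hbox j).2, fun j hj => ?_, fun j hkj hj => ?_, p, hpP, ?_⟩
    · simpa [hj] using (hbox j).1
    · simpa [hj, hkj, Nat.succ_le_iff] using (hbox j).1
    · simpa [hpP] using hp (hbox p).1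

theorem card_add_prod_upper_sub_lower :
    #(CMP k P M) + ∏ j, (upper k P M j - lower k P j) = ∏ j, (M - lower k P j) := by
  have hsub : Fintype.piFinset (fun j => Ico (lower k P j) (upper k P M j)) ⊆
      Fintype.piFinset (fun j => Ico (lower k P j) M) :=
    Fintype.piFinset_subset _ _ fun j => Ico_subset_Ico_right (upper_le k P M j)
  simpa only [Fintype.card_piFinset, Nat.card_Ico, ← eq_sdiff] using
    card_sdiff_add_card_eq_card hsub

variable {k P M}

theorem sub_lower_eq {j : Fin d} (hkM : k j < M) :
    M - lower k P j = upper k P M j - lower k P j + if j ∈ P then k j else 0 := by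
  unfold lower upper
  split_ifs <;> omega

theorem sub_le_upper_sub_lower {K : ℕ} {j : Fin d} (hkK : k j < K) :
    M - K ≤ upper k P M j - lower k P j := by
  unfold lower upper
  split_ifs <;> omega

end CMP

theorem card_CMP_asymptotics_general {d : ℕ} (k : Fin d → ℕ)
    (P : Finset (Fin d)) :
    ∃ C : ℝ, ∀ M : ℕ, (∀ j, k j < M) →
      |((CMP k P M).card : ℝ) - (∑ j ∈ P, (k j : ℝ)) * (M : ℝ) ^ (d - 1)|
        ≤ C * (M : ℝ) ^ (d - 2) := by
  set K := univ.sup k + 1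
  have hkK : ∀ j, k j < K := fun j => Nat.lt_succ_of_le (le_sup (mem_univ j))
  refine ⟨(∑ j ∈ P, (k j : ℝ)) * K * (d - 1 : ℕ), fun M hM => ?_⟩
  set a : Fin d → ℝ := fun j => ((M - CMP.lower k P j : ℕ) : ℝ)
  set b : Fin d → ℝ := fun j => ((CMP.upper k P M j - CMP.lower k P j : ℕ) : ℝ)
  have hcard : (#(CMP k P M) : ℝ) = ∏ j, a j - ∏ j, b j := by
    rw [eq_sub_iff_add_eq]
    simp only [a, b]
    exact_mod_cast CMP.card_add_prod_upper_sub_lower k P M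
  have hsum : ∑ j, (a j - b j) = ∑ j ∈ P, (k j : ℝ) := by
    simp only [a, b, CMP.sub_lower_eq (hM _), Nat.cast_add, add_sub_cancel_left, Nat.cast_ite,
      Nat.cast_zero]
    rw [sum_ite_mem, univ_inter]
  have hMK : (M : ℝ) - ((M - K : ℕ) : ℝ) ≤ K := by
    have : (M : ℝ) ≤ ((M - K : ℕ) : ℝ) + K := by exact_mod_cast le_tsub_add
    linarith
  have h := abs_prod_sub_prod_sub_sum_sub_mul_pow_le (s := univ) (a := a) (b := b)
    (Nat.cast_nonneg (M - K)) (Nat.cast_le.2 (Nat.sub_le M K))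
    (fun j _ => Nat.cast_le.2 (CMP.sub_le_upper_sub_lower (hkK j)))
    (fun j _ => Nat.cast_le.2 (Nat.sub_le_sub_right (CMP.upper_le k P M j) _))
    (fun j _ => Nat.cast_le.2 (Nat.sub_le M _))
  rw [hsum, card_univ, Fintype.card_fin, ← hcard] at h
  calc _ ≤ _ := h
    _ ≤ (∑ j ∈ P, (k j : ℝ)) * (K * (d - 1 : ℕ) * (M : ℝ) ^ (d - 2)) := by gcongr
    _ = _ := by ring

/-- Counting asymptotics: for `k ∈ ℕ^d`, `k ≠ 0`, `P ⊆ S = {j : k_j ≠ 0}`, one has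
`|C_M[P]| = (∑_{j∈P} k_j) M^{d−1} + O(M^{d−2})` as `M → ∞`. -/
theorem card_CMP_asymptotics {d : ℕ} (k : Fin d → ℕ) (hk : k ≠ 0)
    (P : Finset (Fin d)) (hP : ∀ j ∈ P, k j ≠ 0) :
    ∃ C : ℝ, ∀ M : ℕ, (∀ j, k j < M) →
      |((CMP k P M).card : ℝ) - (∑ j ∈ P, (k j : ℝ)) * (M : ℝ) ^ (d - 1)|
        ≤ C * (M : ℝ) ^ (d - 2) :=
  card_CMP_asymptotics_general k P
end
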